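/- For every integer m with 0 ≤ m ≤ 2d₀ + 1 there exist functions G_{1,m}, G_{2,m}, G_{3,m} : [0,∞) → ℝ such that for all x̄ ∈ ℝⁿ, writing r = |x̄|, Σ_{i,j,k=1}^n Δ^m[(∂_k h̄_{ij})²](x̄) = G_{1,m}(r) Σ_{i,j,k=1}^n (∂_k H_{ij}(x̄))² + G_{2,m}(r) Σ_{i,j=1}^n H_{ij}(x̄)² + G_{3,m}(r) |W|², where Δ^m denotes the m-fold iterate of the Euclidean Laplacian on ℝⁿ applied to the function x̄ ↦ Σ_{i,j,k}(∂_k h̄_{ij}(x̄))². -/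

import Mathlib

/-!
Write `ρ_p(x) = p(|x|²)` for a polynomial `p`. The functions
`ρ_p |∇H|² + ρ_q |H|² + ρ_c |W|²` form a family that `Δ` maps into itself. Indeed
`Δ(ρ_p G) = (Δρ_p) G + 2 ∇ρ_p · ∇G + ρ_p ΔG`, and `∇ρ_p · ∇G = 2 p'(|x|²) x · ∇G` is a radial
multiple of `G` by Euler's identity, since `|∇H|²`, `|H|²` and `|W|²` are homogeneous of degrees
`2`, `4` and `0`. Moreover `Δ|∇H|² = 2|W|²` because every `∂_k H_ij` is linear, and
`Δ|H|² = 2|∇H|²` because every `H_ij` is harmonic, which is where the trace condition on `W`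
enters. The function `Σ (∂_k h̄_ij)²` belongs to the family, hence so do all its iterated
Laplacians.
-/

open MeasureTheory Real Filter Topology

noncomputable section

/-- The tensor `H_{ij}(x̄) = Σ_{k,l} W_{ikjl} x^k x^l`. -/
def Hten (n : ℕ) (W4 : Fin n → Fin n → Fin n → Fin n → ℝ) (i j : Fin n)
    (x : EuclideanSpace ℝ (Fin n)) : ℝ :=
  ∑ k, ∑ l, W4 i k j l * x k * x l

/-- The squared tensor norm `|W|² = Σ (W_{ikjl} + W_{iljk})²`. -/
def normWsq (n : ℕ) (W4 : Fin n → Fin n → Fin n → Fin n → ℝ) : ℝ :=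
  ∑ i, ∑ j, ∑ k, ∑ l, (W4 i k j l + W4 i l j k) ^ 2

/-- The symmetric two-tensor `W̃_{ij} = Σ_{k,p,q}(W_{ikpq}+W_{kqip})(W_{jkpq}+W_{kqjp})`. -/
def Wtil (n : ℕ) (W4 : Fin n → Fin n → Fin n → Fin n → ℝ) (i j : Fin n) : ℝ :=
  ∑ k, ∑ p, ∑ q, (W4 i k p q + W4 k q i p) * (W4 j k p q + W4 k q j p)

/-- The partial derivative `∂_k f`. -/
def pd (n : ℕ) (k : Fin n) (f : EuclideanSpace ℝ (Fin n) → ℝ) :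
    EuclideanSpace ℝ (Fin n) → ℝ :=
  fun x => fderiv ℝ f x (EuclideanSpace.single k 1)

/-- The Euclidean Laplacian `Δf = Σ_k ∂_k∂_k f`. -/
def lapl (n : ℕ) (f : EuclideanSpace ℝ (Fin n) → ℝ) :
    EuclideanSpace ℝ (Fin n) → ℝ :=
  fun x => ∑ k, pd n k (pd n k f) x

/-- The tensor `h̄_{ij}(x̄) = f(|x̄|²) H_{ij}(x̄)`. -/
def hbar (n : ℕ) (W4 : Fin n → Fin n → Fin n → Fin n → ℝ) (f : Polynomial ℝ)
    (i j : Fin n) (x : EuclideanSpace ℝ (Fin n)) : ℝ :=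
  Polynomial.eval (‖x‖ ^ 2) f * Hten n W4 i j x

open Polynomial Finset

section Calculus

variable {n : ℕ} {F G : EuclideanSpace ℝ (Fin n) → ℝ} {x : EuclideanSpace ℝ (Fin n)} {k : Fin n}

lemma pd_add (hF : DifferentiableAt ℝ F x) (hG : DifferentiableAt ℝ G x) :
    pd n k (fun y => F y + G y) x = pd n k F x + pd n k G x := by
  simp [pd, fderiv_fun_add hF hG]

lemma pd_mul (hF : DifferentiableAt ℝ F x) (hG : DifferentiableAt ℝ G x) :
    pd n k (fun y => F y * G y) x = pd n k F x * G x + F x * pd n k G x := by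
  simp only [pd, fderiv_fun_mul hF hG, add_apply, smul_apply, smul_eq_mul]
  ring

lemma pd_sum {ι : Type*} (s : Finset ι) {F : ι → EuclideanSpace ℝ (Fin n) → ℝ}
    (hF : ∀ i ∈ s, DifferentiableAt ℝ (F i) x) :
    pd n k (fun y => ∑ i ∈ s, F i y) x = ∑ i ∈ s, pd n k (F i) x := by
  simp [pd, fderiv_fun_sum hF]

lemma pd_const (c : ℝ) : pd n k (fun _ : EuclideanSpace ℝ (Fin n) => c) = fun _ => 0 := by
  ext; simp [pd]

lemma pd_coord (l : Fin n) : pd n k (fun y => y l) x = if l = k then 1 else 0 := by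
  have h := (EuclideanSpace.proj (𝕜 := ℝ) (ι := Fin n) l).hasFDerivAt (x := x)
  rw [pd, show (fun y : EuclideanSpace ℝ (Fin n) => y l) = EuclideanSpace.proj l from rfl,
    h.fderiv]
  simp

lemma contDiff_pd {m : WithTop ℕ∞} (hF : ContDiff ℝ (m + 1) F) : ContDiff ℝ m (pd n k F) :=
  (hF.fderiv_right le_rfl).clm_apply contDiff_const

lemma differentiable_pd (hF : ContDiff ℝ 2 F) : Differentiable ℝ (pd n k F) :=
  (contDiff_pd (m := 1) hF).differentiable one_ne_zero

lemma lapl_const (c : ℝ) : lapl n (fun _ => c) x = 0 := by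
  simp [lapl, pd_const]

lemma lapl_add (hF : ContDiff ℝ 2 F) (hG : ContDiff ℝ 2 G) :
    lapl n (fun y => F y + G y) x = lapl n F x + lapl n G x := by
  have hpd (k : Fin n) : pd n k (fun y => F y + G y) = fun y => pd n k F y + pd n k G y :=
    funext fun y => pd_add (hF.differentiable two_ne_zero y) (hG.differentiable two_ne_zero y)
  simp only [lapl, hpd, pd_add (differentiable_pd hF x) (differentiable_pd hG x), sum_add_distrib]

lemma lapl_sum {ι : Type*} (s : Finset ι) {F : ι → EuclideanSpace ℝ (Fin n) → ℝ}
    (hF : ∀ i ∈ s, ContDiff ℝ 2 (F i)) :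
    lapl n (fun y => ∑ i ∈ s, F i y) x = ∑ i ∈ s, lapl n (F i) x := by
  have hpd (k : Fin n) : pd n k (fun y => ∑ i ∈ s, F i y) = fun y => ∑ i ∈ s, pd n k (F i) y :=
    funext fun y => pd_sum s fun i hi => (hF i hi).differentiable two_ne_zero y
  simp only [lapl, hpd, pd_sum s fun i hi => differentiable_pd (hF i hi) x]
  exact sum_comm

lemma lapl_mul (hF : ContDiff ℝ 2 F) (hG : ContDiff ℝ 2 G) :
    lapl n (fun y => F y * G y) x
      = lapl n F x * G x + 2 * ∑ k, pd n k F x * pd n k G x + F x * lapl n G x := by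
  have hF1 := hF.differentiable two_ne_zero
  have hG1 := hG.differentiable two_ne_zero
  have hpd (k : Fin n) :
      pd n k (fun y => F y * G y) = fun y => pd n k F y * G y + F y * pd n k G y :=
    funext fun y => pd_mul (hF1 y) (hG1 y)
  have hpd2 (k : Fin n) : pd n k (fun y => pd n k F y * G y + F y * pd n k G y) x
      = pd n k (pd n k F) x * G x + 2 * (pd n k F x * pd n k G x) + F x * pd n k (pd n k G) x := by
    have hF2 := differentiable_pd (k := k) hF x
    have hG2 := differentiable_pd (k := k) hG x
    rw [pd_add (hF2.fun_mul (hG1 x)) ((hF1 x).fun_mul hG2), pd_mul hF2 (hG1 x), pd_mul (hF1 x) hG2]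
    ring
  simp only [lapl, hpd, hpd2]
  rw [sum_add_distrib, sum_add_distrib, ← sum_mul, ← mul_sum, ← mul_sum]

lemma lapl_sq (hF : ContDiff ℝ 2 F) :
    lapl n (fun y => F y ^ 2) x = 2 * F x * lapl n F x + 2 * ∑ k, pd n k F x ^ 2 := by
  simp only [sq, lapl_mul hF hF]
  ring

lemma pd_eval_norm_sq (p : ℝ[X]) :
    pd n k (fun y => p.eval (‖y‖ ^ 2)) x = (derivative p).eval (‖x‖ ^ 2) * (2 * x k) := by
  have h := (p.hasDerivAt (‖x‖ ^ 2)).comp_hasFDerivAt x (hasStrictFDerivAt_norm_sq x).hasFDerivAt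
  rw [pd, show (fun y : EuclideanSpace ℝ (Fin n) => p.eval (‖y‖ ^ 2))
    = (fun t => p.eval t) ∘ (fun y => ‖y‖ ^ 2) from rfl, h.fderiv]
  simp [EuclideanSpace.inner_single_right]

lemma sum_coord_mul_pd_of_homogeneous {d : ℕ} (hF : DifferentiableAt ℝ F x)
    (hhom : ∀ t : ℝ, F (t • x) = t ^ d * F x) :
    ∑ k, x k * pd n k F x = d * F x := by
  have h1 : HasDerivAt (fun t : ℝ => F (t • x)) (fderiv ℝ F x x) 1 := by
    have h := hF.hasFDerivAt.comp_hasDerivAt_of_eq (x := (1:ℝ))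
      ((hasDerivAt_id (1:ℝ)).smul_const x) (by simp)
    simp only [Function.comp_def, one_smul] at h
    exact h
  have h2 : HasDerivAt (fun t : ℝ => F (t • x)) (d * F x) 1 := by
    simp_rw [hhom]
    simpa using (hasDerivAt_pow d (1:ℝ)).mul_const (F x)
  rw [← h1.unique h2, ← congrArg (fderiv ℝ F x) ((EuclideanSpace.basisFun (Fin n) ℝ).sum_repr x)]
  simp [pd, map_sum]

def radialLaplacian (n d : ℕ) (p : ℝ[X]) : ℝ[X] :=
  C 4 * X * derivative (derivative p) + C (2 * n + 4 * d : ℝ) * derivative p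

lemma contDiff_eval_norm_sq (p : ℝ[X]) {m : WithTop ℕ∞} :
    ContDiff ℝ m (fun y : EuclideanSpace ℝ (Fin n) => p.eval (‖y‖ ^ 2)) :=
  (by simpa using p.contDiff_aeval (𝕜 := ℝ) m : ContDiff ℝ m fun t => p.eval t).comp
    (contDiff_norm_sq ℝ)

lemma lapl_eval_norm_sq (p : ℝ[X]) :
    lapl n (fun y => p.eval (‖y‖ ^ 2)) x = (radialLaplacian n 0 p).eval (‖x‖ ^ 2) := by
  have hpd (k : Fin n) : pd n k (fun y => p.eval (‖y‖ ^ 2))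
      = fun y => (derivative p).eval (‖y‖ ^ 2) * (2 * y k) :=
    funext fun y => pd_eval_norm_sq p
  have hpd2 (k : Fin n) : pd n k (fun y => (derivative p).eval (‖y‖ ^ 2) * (2 * y k)) x
      = 4 * (derivative (derivative p)).eval (‖x‖ ^ 2) * x k ^ 2
        + 2 * (derivative p).eval (‖x‖ ^ 2) := by
    rw [pd_mul (contDiff_eval_norm_sq _ (m := 1)).differentiable_one.differentiableAt (by fun_prop),
      pd_mul (by fun_prop) (by fun_prop), pd_eval_norm_sq, pd_const, pd_coord]
    simp only [zero_mul, if_true, mul_one, zero_add]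
    ring
  simp only [lapl, hpd, hpd2, sum_add_distrib, ← mul_sum, ← EuclideanSpace.real_norm_sq_eq]
  simp only [sum_const, card_univ, Fintype.card_fin, nsmul_eq_mul, radialLaplacian,
    CharP.cast_eq_zero, mul_zero, add_zero, eval_add, eval_mul, eval_C, eval_X]
  ring

lemma lapl_eval_norm_sq_mul (p : ℝ[X]) {d : ℕ} (hG : ContDiff ℝ 2 G)
    (hhom : ∀ (t : ℝ) y, G (t • y) = t ^ d * G y) :
    lapl n (fun y => p.eval (‖y‖ ^ 2) * G y) x
      = (radialLaplacian n d p).eval (‖x‖ ^ 2) * G x + p.eval (‖x‖ ^ 2) * lapl n G x := by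
  have euler := sum_coord_mul_pd_of_homogeneous (hG.differentiable two_ne_zero x) (hhom · x)
  rw [lapl_mul (contDiff_eval_norm_sq p) hG, lapl_eval_norm_sq]
  have hgrad : ∑ k, (derivative p).eval (‖x‖ ^ 2) * (2 * x k) * pd n k G x
      = 2 * (derivative p).eval (‖x‖ ^ 2) * (d * G x) := by
    rw [← euler, mul_sum]
    exact sum_congr rfl fun k _ => by ring
  simp only [pd_eval_norm_sq, hgrad, radialLaplacian, eval_add, eval_mul, eval_C, eval_X]
  ring

end Calculus

section Weyl

variable {n : ℕ} (W4 : Fin n → Fin n → Fin n → Fin n → ℝ) {x : EuclideanSpace ℝ (Fin n)}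

lemma contDiff_Hten (i j : Fin n) {m : WithTop ℕ∞} : ContDiff ℝ m (Hten n W4 i j) := by
  unfold Hten; fun_prop

lemma Hten_smul (i j : Fin n) (t : ℝ) (x : EuclideanSpace ℝ (Fin n)) :
    Hten n W4 i j (t • x) = t ^ 2 * Hten n W4 i j x := by
  simp only [Hten, mul_sum, PiLp.smul_apply, smul_eq_mul]
  exact sum_congr rfl fun _ _ => sum_congr rfl fun _ _ => by ring

lemma pd_Hten (i j k : Fin n) :
    pd n k (Hten n W4 i j) x = ∑ l, (W4 i k j l + W4 i l j k) * x l := by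
  unfold Hten
  simp (disch := fun_prop) only [pd_sum, pd_mul, pd_coord, pd_const]
  simp [add_mul, sum_add_distrib]

lemma pd_pd_Hten (i j k l : Fin n) :
    pd n l (pd n k (Hten n W4 i j)) x = W4 i k j l + W4 i l j k := by
  have h : pd n k (Hten n W4 i j) = fun y => ∑ l, (W4 i k j l + W4 i l j k) * y l :=
    funext fun y => pd_Hten W4 i j k
  simp (disch := fun_prop) [h, pd_sum, pd_mul, pd_coord, pd_const]

lemma lapl_Hten (hanti1 : ∀ i j k l, W4 i j k l = -W4 j i k l)
    (hanti2 : ∀ i j k l, W4 i j k l = -W4 i j l k) (htrace : ∀ j k, ∑ i, W4 i j i k = 0)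
    (i j : Fin n) : lapl n (Hten n W4 i j) x = 0 := by
  have h (k : Fin n) : W4 i k j k = W4 k i k j := by rw [hanti1, hanti2, neg_neg]
  simp [lapl, pd_pd_Hten, h, ← two_mul, ← mul_sum, htrace]

def normSqGradHten (n : ℕ) (W4 : Fin n → Fin n → Fin n → Fin n → ℝ)
    (x : EuclideanSpace ℝ (Fin n)) : ℝ :=
  ∑ i, ∑ j, ∑ k, pd n k (Hten n W4 i j) x ^ 2

def normSqHten (n : ℕ) (W4 : Fin n → Fin n → Fin n → Fin n → ℝ)
    (x : EuclideanSpace ℝ (Fin n)) : ℝ :=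
  ∑ i, ∑ j, Hten n W4 i j x ^ 2

lemma contDiff_normSqGradHten {m : WithTop ℕ∞} : ContDiff ℝ m (normSqGradHten n W4) := by
  unfold normSqGradHten
  have (i j k : Fin n) : ContDiff ℝ m (pd n k (Hten n W4 i j)) := contDiff_pd (contDiff_Hten ..)
  fun_prop

lemma contDiff_normSqHten {m : WithTop ℕ∞} : ContDiff ℝ m (normSqHten n W4) := by
  unfold normSqHten
  have := contDiff_Hten W4 (m := m)
  fun_prop

lemma pd_Hten_smul (i j k : Fin n) (t : ℝ) :
    pd n k (Hten n W4 i j) (t • x) = t * pd n k (Hten n W4 i j) x := by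
  simp only [pd_Hten, mul_sum, PiLp.smul_apply, smul_eq_mul]
  exact sum_congr rfl fun _ _ => by ring

lemma normSqGradHten_smul (t : ℝ) (x : EuclideanSpace ℝ (Fin n)) :
    normSqGradHten n W4 (t • x) = t ^ 2 * normSqGradHten n W4 x := by
  simp only [normSqGradHten, pd_Hten_smul, mul_pow, mul_sum]

lemma normSqHten_smul (t : ℝ) (x : EuclideanSpace ℝ (Fin n)) :
    normSqHten n W4 (t • x) = t ^ 4 * normSqHten n W4 x := by
  simp only [normSqHten, Hten_smul, mul_sum]
  exact sum_congr rfl fun _ _ => sum_congr rfl fun _ _ => by ring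

lemma lapl_pd_Hten (i j k : Fin n) : lapl n (pd n k (Hten n W4 i j)) x = 0 := by
  have h (l : Fin n) : pd n l (pd n k (Hten n W4 i j)) = fun _ => W4 i k j l + W4 i l j k :=
    funext fun _ => pd_pd_Hten W4 i j k l
  simp [lapl, h, pd_const]

lemma lapl_normSqGradHten : lapl n (normSqGradHten n W4) x = 2 * normWsq n W4 := by
  have (i j k : Fin n) : ContDiff ℝ 2 (pd n k (Hten n W4 i j)) := contDiff_pd (contDiff_Hten ..)
  unfold normSqGradHten
  simp (disch := fun_prop) only [lapl_sum, lapl_sq, lapl_pd_Hten, pd_pd_Hten]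
  simp [normWsq, mul_sum]

lemma lapl_normSqHten (hanti1 : ∀ i j k l, W4 i j k l = -W4 j i k l)
    (hanti2 : ∀ i j k l, W4 i j k l = -W4 i j l k) (htrace : ∀ j k, ∑ i, W4 i j i k = 0) :
    lapl n (normSqHten n W4) x = 2 * normSqGradHten n W4 x := by
  have := contDiff_Hten W4 (m := 2)
  unfold normSqHten
  simp (disch := fun_prop) only [lapl_sum, lapl_sq, lapl_Hten W4 hanti1 hanti2 htrace]
  simp [normSqGradHten, mul_sum]

end Weyl

section RadialComb

variable {n : ℕ} (W4 : Fin n → Fin n → Fin n → Fin n → ℝ)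

def weylRadialComb (n : ℕ) (W4 : Fin n → Fin n → Fin n → Fin n → ℝ) (p q c : ℝ[X])
    (x : EuclideanSpace ℝ (Fin n)) : ℝ :=
  p.eval (‖x‖ ^ 2) * normSqGradHten n W4 x + q.eval (‖x‖ ^ 2) * normSqHten n W4 x
    + c.eval (‖x‖ ^ 2) * normWsq n W4

lemma lapl_weylRadialComb (hanti1 : ∀ i j k l, W4 i j k l = -W4 j i k l)
    (hanti2 : ∀ i j k l, W4 i j k l = -W4 i j l k) (htrace : ∀ j k, ∑ i, W4 i j i k = 0)
    (p q c : ℝ[X]) :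
    lapl n (weylRadialComb n W4 p q c)
      = weylRadialComb n W4 (radialLaplacian n 2 p + C 2 * q) (radialLaplacian n 4 q)
          (radialLaplacian n 0 c + C 2 * p) := by
  funext x
  have := contDiff_normSqGradHten W4 (m := 2)
  have := contDiff_normSqHten W4 (m := 2)
  have := contDiff_eval_norm_sq (n := n) (m := 2)
  unfold weylRadialComb
  simp (disch := fun_prop) only [lapl_add]
  rw [lapl_eval_norm_sq_mul p (contDiff_normSqGradHten W4) (normSqGradHten_smul W4),
    lapl_eval_norm_sq_mul q (contDiff_normSqHten W4) (normSqHten_smul W4),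
    lapl_eval_norm_sq_mul (d := 0) c contDiff_const (by simp), lapl_const,
    lapl_normSqGradHten, lapl_normSqHten W4 hanti1 hanti2 htrace]
  simp only [eval_add, eval_mul, eval_C]
  ring

lemma exists_iterate_lapl_weylRadialComb (hanti1 : ∀ i j k l, W4 i j k l = -W4 j i k l)
    (hanti2 : ∀ i j k l, W4 i j k l = -W4 i j l k) (htrace : ∀ j k, ∑ i, W4 i j i k = 0)
    (m : ℕ) (p q c : ℝ[X]) :
    ∃ p' q' c' : ℝ[X], (lapl n)^[m] (weylRadialComb n W4 p q c) = weylRadialComb n W4 p' q' c' := by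
  induction m generalizing p q c with
  | zero => exact ⟨p, q, c, rfl⟩
  | succ m ih =>
    rw [Function.iterate_succ_apply, lapl_weylRadialComb W4 hanti1 hanti2 htrace]
    exact ih ..

end RadialComb

section Hbar

variable {n : ℕ} (W4 : Fin n → Fin n → Fin n → Fin n → ℝ) (f : ℝ[X]) {x : EuclideanSpace ℝ (Fin n)}

lemma pd_hbar (i j k : Fin n) :
    pd n k (hbar n W4 f i j) x
      = f.eval (‖x‖ ^ 2) * pd n k (Hten n W4 i j) x
        + (derivative f).eval (‖x‖ ^ 2) * Hten n W4 i j x * (2 * x k) := by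
  have hf := (contDiff_eval_norm_sq f (n := n) (m := 1)).differentiable one_ne_zero x
  have hH := (contDiff_Hten W4 i j (m := 1)).differentiable one_ne_zero x
  unfold hbar
  rw [pd_mul hf hH, pd_eval_norm_sq]
  ring

lemma sum_sq_pd_hbar (i j : Fin n) :
    ∑ k, pd n k (hbar n W4 f i j) x ^ 2
      = f.eval (‖x‖ ^ 2) ^ 2 * ∑ k, pd n k (Hten n W4 i j) x ^ 2
        + (4 * ‖x‖ ^ 2 * (derivative f).eval (‖x‖ ^ 2) ^ 2
          + 8 * f.eval (‖x‖ ^ 2) * (derivative f).eval (‖x‖ ^ 2)) * Hten n W4 i j x ^ 2 := by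
  have euler : ∑ k, x k * pd n k (Hten n W4 i j) x = 2 * Hten n W4 i j x := by
    exact_mod_cast sum_coord_mul_pd_of_homogeneous
      ((contDiff_Hten W4 i j (m := 1)).differentiable one_ne_zero x) (Hten_smul W4 i j · x)
  have hexpand (k : Fin n) : pd n k (hbar n W4 f i j) x ^ 2
      = f.eval (‖x‖ ^ 2) ^ 2 * pd n k (Hten n W4 i j) x ^ 2
        + 4 * f.eval (‖x‖ ^ 2) * (derivative f).eval (‖x‖ ^ 2) * Hten n W4 i j x
          * (x k * pd n k (Hten n W4 i j) x)
        + 4 * ((derivative f).eval (‖x‖ ^ 2) * Hten n W4 i j x) ^ 2 * x k ^ 2 := by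
    rw [pd_hbar]; ring
  simp only [hexpand, sum_add_distrib, ← mul_sum, euler, ← EuclideanSpace.real_norm_sq_eq]
  ring

lemma sum_sq_pd_hbar_eq_weylRadialComb :
    (fun y => ∑ i, ∑ j, ∑ k, pd n k (hbar n W4 f i j) y ^ 2)
      = weylRadialComb n W4 (f ^ 2) (C 4 * X * derivative f ^ 2 + C 8 * f * derivative f) 0 := by
  funext x
  simp only [sum_sq_pd_hbar, sum_add_distrib, ← mul_sum, weylRadialComb, normSqGradHten,
    normSqHten, eval_add, eval_mul, eval_pow, eval_C, eval_X, eval_zero]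
  ring

end Hbar

theorem stmt_15_general (n : ℕ) (W4 : Fin n → Fin n → Fin n → Fin n → ℝ)
    (hanti1 : ∀ i j k l, W4 i j k l = -W4 j i k l)
    (hanti2 : ∀ i j k l, W4 i j k l = -W4 i j l k)
    (htrace : ∀ j k, ∑ i, W4 i j i k = 0)
    (d₀ : ℕ) (f : Polynomial ℝ) :
    ∀ m : ℕ, m ≤ 2 * d₀ + 1 →
      ∃ G₁ G₂ G₃ : ℝ → ℝ,
        ∀ x : EuclideanSpace ℝ (Fin n),
          (lapl n)^[m]
              (fun y => ∑ i, ∑ j, ∑ k, (pd n k (hbar n W4 f i j) y) ^ 2) x =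
            G₁ ‖x‖ * (∑ i, ∑ j, ∑ k, (pd n k (Hten n W4 i j) x) ^ 2) +
              G₂ ‖x‖ * (∑ i, ∑ j, (Hten n W4 i j x) ^ 2) +
              G₃ ‖x‖ * normWsq n W4 := by
  intro m _
  obtain ⟨p, q, c, hiter⟩ := exists_iterate_lapl_weylRadialComb W4 hanti1 hanti2 htrace m
    (f ^ 2) (C 4 * X * derivative f ^ 2 + C 8 * f * derivative f) 0
  refine ⟨fun r => p.eval (r ^ 2), fun r => q.eval (r ^ 2), fun r => c.eval (r ^ 2), fun x => ?_⟩
  rw [sum_sq_pd_hbar_eq_weylRadialComb, hiter]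
  rfl

theorem stmt_15 (n : ℕ) (hn : 2 ≤ n) (W4 : Fin n → Fin n → Fin n → Fin n → ℝ)
    (hanti1 : ∀ i j k l, W4 i j k l = -W4 j i k l)
    (hanti2 : ∀ i j k l, W4 i j k l = -W4 i j l k)
    (hsymm : ∀ i j k l, W4 i j k l = W4 k l i j)
    (hbianchi : ∀ i j k l, W4 i j k l + W4 i k l j + W4 i l j k = 0)
    (htrace : ∀ j k, ∑ i, W4 i j i k = 0)
    (d₀ : ℕ) (hd₀ : 1 ≤ d₀ ∧ d₀ ≤ 4) (f : Polynomial ℝ) (hf : f.natDegree = d₀) :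
    ∀ m : ℕ, m ≤ 2 * d₀ + 1 →
      ∃ G₁ G₂ G₃ : ℝ → ℝ,
        ∀ x : EuclideanSpace ℝ (Fin n),
          (lapl n)^[m]
              (fun y => ∑ i, ∑ j, ∑ k, (pd n k (hbar n W4 f i j) y) ^ 2) x =
            G₁ ‖x‖ * (∑ i, ∑ j, ∑ k, (pd n k (Hten n W4 i j) x) ^ 2) +
              G₂ ‖x‖ * (∑ i, ∑ j, (Hten n W4 i j x) ^ 2) +
              G₃ ‖x‖ * normWsq n W4 :=
  stmt_15_general n W4 hanti1 hanti2 htrace d₀ f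

end
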